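/- arXiv:2209.04984 — 2 statements merged into one kernel-verified Lean document; each statement's English description precedes it below -/
import Mathlib

section
/- Let D, H_A, H_P, β, P_t, P_F, σ², σ_F², N_p be positive reals, and set C₁ = σ_F² P_F β N_p², C₂ = σ² P_t H_P², C₃ = H_P² σ_F² σ²/β, a = P_t σ²/(P_F σ_F²). Define d_PA(x)² = x² + (H_P − H_A)² and d_AR(x)² = (D − x)² + H_A². If 4√(C₁C₂) ≥ C₃·(D² + H_A² + (H_P − H_A)²), then for every x ∈ [0, D], C₃ d_PA(x)² d_AR(x)² ≤ (C₂/a) d_PA(x)² + aC₁ d_AR(x)². -/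
/-! Writing `u = d_PA²`, `v = d_AR²` and `t = √(uv)`, AM–GM twice gives
`C₃ t ≤ C₃ (u + v) / 2 ≤ 2√(C₁C₂)` and `2√(C₁C₂) t ≤ (C₂/a) u + aC₁ v`, since the two
coefficients multiply to `C₁C₂`; multiplying the first by `t` and chaining yields the claim.
The hypothesis controls `u + v` because `x² + (D − x)² ≤ D²` on `[0, D]`. -/

open Real

theorem two_mul_sqrt_mul_le_add {a b : ℝ} (ha : 0 ≤ a) (hb : 0 ≤ b) :
    2 * √(a * b) ≤ a + b := by
  rw [sqrt_mul ha]
  nlinarith [sq_nonneg (√a - √b), sq_sqrt ha, sq_sqrt hb]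

theorem mul_mul_le_add_of_mul_add_le_four_sqrt {c p q u v : ℝ} (hc : 0 ≤ c) (hp : 0 ≤ p)
    (hq : 0 ≤ q) (hu : 0 ≤ u) (hv : 0 ≤ v) (h : c * (u + v) ≤ 4 * √(p * q)) :
    c * u * v ≤ p * u + q * v := by
  set t := √(u * v)
  have hct : c * t ≤ 2 * √(p * q) := by
    have := mul_le_mul_of_nonneg_left (two_mul_sqrt_mul_le_add hu hv) hc
    linarith
  have hamgm : 2 * (√(p * q) * t) ≤ p * u + q * v := by
    have := two_mul_sqrt_mul_le_add (mul_nonneg hp hu) (mul_nonneg hq hv)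
    rwa [show p * u * (q * v) = p * q * (u * v) by ring, sqrt_mul (mul_nonneg hp hq)] at this
  calc c * u * v = c * t * t := by rw [mul_assoc c t, mul_self_sqrt (mul_nonneg hu hv), mul_assoc]
    _ ≤ 2 * √(p * q) * t := mul_le_mul_of_nonneg_right hct (sqrt_nonneg _)
    _ = 2 * (√(p * q) * t) := by ring
    _ ≤ p * u + q * v := hamgm

theorem sq_add_sub_sq_le_sq {x D : ℝ} (hx : x ∈ Set.Icc 0 D) : x ^ 2 + (D - x) ^ 2 ≤ D ^ 2 := by
  nlinarith [mul_nonneg hx.1 (sub_nonneg.2 hx.2)]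

theorem tpar_cross_term_dominated_general (D HA HP β Pt PF σ2 σF2 Np : ℝ)
    (hβ : 0 < β) (hPt : 0 < Pt)
    (hPF : 0 < PF) (hσ2 : 0 < σ2) (hσF2 : 0 < σF2)
    (C₁ C₂ C₃ a : ℝ)
    (hC₁ : C₁ = σF2 * PF * β * Np ^ 2) (hC₂ : C₂ = σ2 * Pt * HP ^ 2)
    (hC₃ : C₃ = HP ^ 2 * σF2 * σ2 / β) (ha : a = Pt * σ2 / (PF * σF2))
    (hcond : 4 * Real.sqrt (C₁ * C₂) ≥ C₃ * (D ^ 2 + HA ^ 2 + (HP - HA) ^ 2)) :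
    ∀ x ∈ Set.Icc (0 : ℝ) D,
      C₃ * (x ^ 2 + (HP - HA) ^ 2) * ((D - x) ^ 2 + HA ^ 2) ≤
        (C₂ / a) * (x ^ 2 + (HP - HA) ^ 2) + a * C₁ * ((D - x) ^ 2 + HA ^ 2) := by
  intro x hx
  have ha_pos : 0 < a := by rw [ha]; positivity
  have hC₃_nonneg : 0 ≤ C₃ := by rw [hC₃]; positivity
  have hcoeff : C₂ / a * (a * C₁) = C₁ * C₂ := by field_simp
  apply mul_mul_le_add_of_mul_add_le_four_sqrt hC₃_nonneg (by rw [hC₂]; positivity)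
    (by rw [hC₁]; positivity) (by positivity) (by positivity)
  rw [hcoeff]
  refine le_trans ?_ hcond
  have := sq_add_sub_sq_le_sq hx
  exact mul_le_mul_of_nonneg_left (by linarith) hC₃_nonneg

/-- Precise form of Lemma 3 of the paper for the TPAR scheme: if
`4√(C₁C₂) ≥ C₃(D² + H_A² + (H_P−H_A)²)`, then for every `x ∈ [0, D]` the cross
term `C₃ d_PA(x)² d_AR(x)²` is dominated by `(C₂/a) d_PA(x)² + aC₁ d_AR(x)²`. -/
theorem tpar_cross_term_dominated (D HA HP β Pt PF σ2 σF2 Np : ℝ)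
    (hD : 0 < D) (hHA : 0 < HA) (hHP : 0 < HP) (hβ : 0 < β) (hPt : 0 < Pt)
    (hPF : 0 < PF) (hσ2 : 0 < σ2) (hσF2 : 0 < σF2) (hNp : 0 < Np)
    (C₁ C₂ C₃ a : ℝ)
    (hC₁ : C₁ = σF2 * PF * β * Np ^ 2) (hC₂ : C₂ = σ2 * Pt * HP ^ 2)
    (hC₃ : C₃ = HP ^ 2 * σF2 * σ2 / β) (ha : a = Pt * σ2 / (PF * σF2))
    (hcond : 4 * Real.sqrt (C₁ * C₂) ≥ C₃ * (D ^ 2 + HA ^ 2 + (HP - HA) ^ 2)) :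
    ∀ x ∈ Set.Icc (0 : ℝ) D,
      C₃ * (x ^ 2 + (HP - HA) ^ 2) * ((D - x) ^ 2 + HA ^ 2) ≤
        (C₂ / a) * (x ^ 2 + (HP - HA) ^ 2) + a * C₁ * ((D - x) ^ 2 + HA ^ 2) :=
  tpar_cross_term_dominated_general D HA HP β Pt PF σ2 σF2 Np hβ hPt hPF hσ2 hσF2 C₁ C₂ C₃ a hC₁ hC₂
    hC₃ ha hcond
end

section
/- Let D, H_A, H_P, β, P_t, σ², σ_F², N_a, N_p be positive reals. For P_F > N_a σ_F², define a(P_F) = P_t σ²/(P_F σ_F²), b = β N_p²/H_P², x_b(P_F) = √(max{0, N_a N_p² β² P_t/((P_F − N_a σ_F²) H_P²) − (H_P − H_A)²}), and x^b(P_F) = max{a(P_F)·b·D/(a(P_F)·b + 1), x_b(P_F)}. Then x^b is non-increasing on (N_a σ_F², ∞): for all N_a σ_F² < P_F ≤ P_F', x^b(P_F') ≤ x^b(P_F). -/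
/-! Both arguments of the max decrease in `P_F`: `a(P_F)` decreases and `t ↦ tD/(t+1)` is
increasing, while the radicand of `x_b(P_F)` has the decreasing factor `1/(P_F - N_aσ_F²)`. -/

theorem monotoneOn_mul_div_add_one {D : ℝ} (hD : 0 ≤ D) :
    MonotoneOn (fun t : ℝ => t * D / (t + 1)) (Set.Ici 0) := by
  intro s hs t ht hst
  simp only [Set.mem_Ici] at hs ht
  rw [div_le_div_iff₀ (by positivity) (by positivity)]
  nlinarith [mul_le_mul_of_nonneg_right hst hD]

theorem antitoneOn_div_mul {K c : ℝ} (hK : 0 ≤ K) (hc : 0 < c) :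
    AntitoneOn (fun x : ℝ => K / (x * c)) (Set.Ioi 0) := fun _ hx _ _ hxy =>
  div_le_div_of_nonneg_left hK (mul_pos hx hc) (mul_le_mul_of_nonneg_right hxy hc.le)

theorem tpar_placement_antitone_in_PF_general (D HA HP β Pt σ2 σF2 Na Np : ℝ)
    (hD : 0 < D) (hHP : 0 < HP) (hβ : 0 < β) (hPt : 0 < Pt)
    (hσ2 : 0 < σ2) (hσF2 : 0 < σF2) (hNa : 0 < Na) :
    ∀ PF PF' : ℝ, Na * σF2 < PF → PF ≤ PF' →
      max ((Pt * σ2 / (PF' * σF2)) * (β * Np ^ 2 / HP ^ 2) * D /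
            ((Pt * σ2 / (PF' * σF2)) * (β * Np ^ 2 / HP ^ 2) + 1))
        (Real.sqrt (max 0
          (Na * Np ^ 2 * β ^ 2 * Pt / ((PF' - Na * σF2) * HP ^ 2) - (HP - HA) ^ 2))) ≤
      max ((Pt * σ2 / (PF * σF2)) * (β * Np ^ 2 / HP ^ 2) * D /
            ((Pt * σ2 / (PF * σF2)) * (β * Np ^ 2 / HP ^ 2) + 1))
        (Real.sqrt (max 0
          (Na * Np ^ 2 * β ^ 2 * Pt / ((PF - Na * σF2) * HP ^ 2) - (HP - HA) ^ 2))) := by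
  intro PF PF' hPF hle
  have hPF_pos : 0 < PF := (by positivity : 0 < Na * σF2).trans hPF
  have hPF'_pos : 0 < PF' := hPF_pos.trans_le hle
  have hgap : 0 < PF - Na * σF2 := sub_pos.2 hPF
  have ha_anti : Pt * σ2 / (PF' * σF2) ≤ Pt * σ2 / (PF * σF2) :=
    antitoneOn_div_mul (by positivity) hσF2 hPF_pos hPF'_pos hle
  refine max_le_max ?_ (Real.sqrt_le_sqrt (max_le_max le_rfl (sub_le_sub_right ?_ _)))
  · exact monotoneOn_mul_div_add_one hD.le (Set.mem_Ici.2 (by positivity))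
      (Set.mem_Ici.2 (by positivity)) (mul_le_mul_of_nonneg_right ha_anti (by positivity))
  · exact antitoneOn_div_mul (by positivity) (by positivity) hgap
      (hgap.trans_le (sub_le_sub_right hle _)) (sub_le_sub_right hle _)

/-- Lemma 2 of the paper, `P_F` part (TPAR scheme): the optimized Tx–AIRS
horizontal distance `x^b(P_F) = max (a(P_F)bD/(a(P_F)b+1)) (x_b(P_F))` is
non-increasing in the AIRS amplification power budget `P_F` on `(N_aσ_F², ∞)`. -/
theorem tpar_placement_antitone_in_PF (D HA HP β Pt σ2 σF2 Na Np : ℝ)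
    (hD : 0 < D) (hHA : 0 < HA) (hHP : 0 < HP) (hβ : 0 < β) (hPt : 0 < Pt)
    (hσ2 : 0 < σ2) (hσF2 : 0 < σF2) (hNa : 0 < Na) (hNp : 0 < Np) :
    ∀ PF PF' : ℝ, Na * σF2 < PF → PF ≤ PF' →
      max ((Pt * σ2 / (PF' * σF2)) * (β * Np ^ 2 / HP ^ 2) * D /
            ((Pt * σ2 / (PF' * σF2)) * (β * Np ^ 2 / HP ^ 2) + 1))
        (Real.sqrt (max 0
          (Na * Np ^ 2 * β ^ 2 * Pt / ((PF' - Na * σF2) * HP ^ 2) - (HP - HA) ^ 2))) ≤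
      max ((Pt * σ2 / (PF * σF2)) * (β * Np ^ 2 / HP ^ 2) * D /
            ((Pt * σ2 / (PF * σF2)) * (β * Np ^ 2 / HP ^ 2) + 1))
        (Real.sqrt (max 0
          (Na * Np ^ 2 * β ^ 2 * Pt / ((PF - Na * σF2) * HP ^ 2) - (HP - HA) ^ 2))) :=
  tpar_placement_antitone_in_PF_general D HA HP β Pt σ2 σF2 Na Np hD hHP hβ hPt hσ2 hσF2 hNa
end
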